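/- Let ρ = 3 − √8, and for 0 < t < ρ let D(t) = (1/4)·((1+t)/√(1−6t+t²) − 1) and E(t) = S(t)²/(1−R(t))², where S(t) = (1−3t−√(1−6t+t²))/(4t) and R(t) = S(t)+t(1+S(t)). Then as t → ρ⁻: (i) D(t) − 2^{−7/4}·(1 − t/ρ)^{−1/2} remains bounded on (0,ρ); (ii) (E(t) − 2^{−5/2}·(1 − t/ρ)^{−1})·(1 − t/ρ)^{1/2} remains bounded on (0,ρ). -/

import Mathlib

/-!
The discriminant factors as `1 - 6t + t² = (ρ - t)(3 + √8 - t)`, so the substitution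
`t = ρ - u²` turns `√(1 - 6t + t²)` into `u · √(4√2 + u²)`, which is smooth in `u`.
Then `D(ρ - u²) = d(u)/u - 1/4` and `E(ρ - u²) = e(u)/u²` with `d`, `e` smooth on `[0, √ρ]`,
and the singular terms of the statement are exactly `d(0)/u` and `e(0)/u²`. What remains are
the difference quotients `(d(u) - d(0))/u` and `(e(u) - e(0))/u`, bounded because a `C¹`
function is Lipschitz on a compact interval.
-/

noncomputable def rhoN : ℝ := 3 - Real.sqrt 8

noncomputable def Sfun (t : ℝ) : ℝ :=
  (1 - 3 * t - Real.sqrt (1 - 6 * t + t ^ 2)) / (4 * t)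

noncomputable def Rfun (t : ℝ) : ℝ := Sfun t + t * (1 + Sfun t)

noncomputable def Dfun (t : ℝ) : ℝ :=
  (1 / 4) * ((1 + t) / Real.sqrt (1 - 6 * t + t ^ 2) - 1)

noncomputable def Efun (t : ℝ) : ℝ := (Sfun t) ^ 2 / (1 - Rfun t) ^ 2

open Set Real

theorem ContDiffOn.exists_abs_slope_le {ψ : ℝ → ℝ} {a b : ℝ}
    (hψ : ContDiffOn ℝ 1 ψ (Icc a b)) :
    ∃ C, ∀ x ∈ Icc a b, ∀ y ∈ Icc a b, |slope ψ x y| ≤ C := by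
  obtain ⟨K, hK⟩ := hψ.exists_lipschitzOnWith one_ne_zero (convex_Icc a b) isCompact_Icc
  refine ⟨K, fun x hx y hy => ?_⟩
  rw [slope_def_field, abs_div]
  exact div_le_of_le_mul₀ (abs_nonneg _) K.coe_nonneg (hK.dist_le_mul y hy x hx)

theorem sq_rpow_neg_half {x : ℝ} (hx : 0 ≤ x) : (x ^ 2) ^ (-(1 : ℝ) / 2) = x⁻¹ := by
  rw [neg_div, rpow_neg (sq_nonneg x), ← sqrt_eq_rpow, sqrt_sq hx]

theorem sq_rpow_half {x : ℝ} (hx : 0 ≤ x) : (x ^ 2) ^ ((1 : ℝ) / 2) = x := by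
  rw [← sqrt_eq_rpow, sqrt_sq hx]

theorem sq_sqrt_two : √2 ^ 2 = 2 := sq_sqrt zero_le_two

theorem sqrt_two_mem_Ioo : √2 ∈ Ioo (1.4 : ℝ) 1.5 := by
  constructor <;> nlinarith [sq_sqrt_two, sqrt_nonneg 2]

theorem rhoN_eq : rhoN = 3 - 2 * √2 := by
  rw [rhoN, show (8:ℝ) = 2 ^ 2 * 2 by norm_num, sqrt_mul (by positivity), sqrt_sq zero_le_two]

theorem rhoN_mem_Ioo : rhoN ∈ Ioo (0 : ℝ) (1 / 5) := by
  obtain ⟨h₁, h₂⟩ := sqrt_two_mem_Ioo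
  rw [rhoN_eq]; constructor <;> linarith

theorem sqrt_rhoN : √rhoN = √2 - 1 := by
  have h : rhoN = (√2 - 1) ^ 2 := by rw [rhoN_eq]; linear_combination -sq_sqrt_two
  rw [h, sqrt_sq (by linarith [sqrt_two_mem_Ioo.1])]

/-- `√(3 + √8 - t)` at `t = ρ - u²`. -/
noncomputable def conjRoot (u : ℝ) : ℝ := √(4 * √2 + u ^ 2)

theorem conjRoot_pos (u : ℝ) : 0 < conjRoot u :=
  sqrt_pos.2 (by positivity)

theorem sq_conjRoot (u : ℝ) : conjRoot u ^ 2 = 4 * √2 + u ^ 2 :=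
  sq_sqrt (by positivity)

theorem discr_rhoN_sub_sq (u : ℝ) :
    1 - 6 * (rhoN - u ^ 2) + (rhoN - u ^ 2) ^ 2 = (u * conjRoot u) ^ 2 := by
  rw [mul_pow, sq_conjRoot, rhoN_eq]
  linear_combination 4 * sq_sqrt_two

noncomputable def dRegular (u : ℝ) : ℝ := (1 + rhoN - u ^ 2) / (4 * conjRoot u)

noncomputable def eRegular (u : ℝ) : ℝ :=
  (2 * (rhoN - u ^ 2) / (conjRoot u * (u * conjRoot u + 1 - rhoN + u ^ 2))) ^ 2

theorem contDiff_conjRoot : ContDiff ℝ 1 conjRoot := by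
  unfold conjRoot
  fun_prop (disch := intro u; positivity)

theorem contDiff_dRegular : ContDiff ℝ 1 dRegular := by
  have := contDiff_conjRoot
  unfold dRegular
  fun_prop (disch := intro u; exact mul_ne_zero four_ne_zero (conjRoot_pos u).ne')

theorem contDiffOn_eRegular : ContDiffOn ℝ 1 eRegular (Ici 0) := by
  have := contDiff_conjRoot
  have hden (u : ℝ) (hu : u ∈ Ici 0) :
      conjRoot u * (u * conjRoot u + 1 - rhoN + u ^ 2) ≠ 0 := by
    have := conjRoot_pos u
    have : 0 < u * conjRoot u + 1 - rhoN + u ^ 2 := by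
      nlinarith [rhoN_mem_Ioo.2, mul_nonneg (mem_Ici.1 hu) this.le]
    positivity
  unfold eRegular
  fun_prop (disch := exact hden)

theorem Dfun_rhoN_sub_sq {u : ℝ} (hu : 0 < u) :
    Dfun (rhoN - u ^ 2) = dRegular u / u - 1 / 4 := by
  have := conjRoot_pos u
  rw [Dfun, discr_rhoN_sub_sq, sqrt_sq (by positivity), dRegular]
  field_simp
  ring

theorem Efun_eq_of_sq_eq_discr {t d : ℝ} (ht : 0 < t) (ht' : t < 1 / 3) (hd : 0 ≤ d)
    (hsq : d ^ 2 = 1 - 6 * t + t ^ 2) :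
    Efun t = (2 * t / (d * (d + 1 - t))) ^ 2 := by
  have hd2 : √(1 - 6 * t + t ^ 2) = d := by rw [← hsq, sqrt_sq hd]
  have hden : 0 < 1 - 3 * t + d := by linarith
  have hS : Sfun t = 2 * t / (1 - 3 * t + d) := by
    rw [Sfun, hd2, div_eq_div_iff (by positivity) hden.ne']
    linear_combination -hsq
  have hR : 1 - Rfun t = d * (d + 1 - t) / (1 - 3 * t + d) := by
    rw [Rfun, hS, eq_div_iff hden.ne']
    linear_combination (-(1 + t)) * div_mul_cancel₀ (2 * t) hden.ne' - hsq
  rw [Efun, hS, hR, ← div_pow, div_div_div_cancel_right₀ hden.ne']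

theorem Efun_rhoN_sub_sq {u : ℝ} (hu : u ∈ Ioo 0 √rhoN) :
    Efun (rhoN - u ^ 2) = eRegular u / u ^ 2 := by
  obtain ⟨hu, hur⟩ := hu
  rw [lt_sqrt hu.le] at hur
  have hv := conjRoot_pos u
  rw [Efun_eq_of_sq_eq_discr (by linarith) (by linarith [rhoN_mem_Ioo.2, sq_nonneg u])
    (by positivity) (discr_rhoN_sub_sq u).symm, eRegular, div_pow, div_pow]
  field_simp
  ring

theorem two_rpow_neg_seven_fourths : (2 : ℝ) ^ (-(7 : ℝ) / 4) = √(√2) / 4 := by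
  rw [sqrt_eq_rpow, sqrt_eq_rpow, ← rpow_mul zero_le_two,
    show -(7 : ℝ) / 4 = 1 / 2 * (1 / 2) + (-2 : ℤ) by norm_num, rpow_add two_pos, rpow_intCast]
  norm_num
  ring

theorem two_rpow_neg_five_halves : (2 : ℝ) ^ (-(5 : ℝ) / 2) = √2 / 8 := by
  rw [sqrt_eq_rpow, show -(5 : ℝ) / 2 = 1 / 2 + (-3 : ℤ) by norm_num, rpow_add two_pos,
    rpow_intCast]
  norm_num
  ring

theorem dRegular_zero : dRegular 0 = 2 ^ (-(7 : ℝ) / 4) * √rhoN := by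
  have hw : √(√2) ^ 2 = √2 := sq_sqrt (sqrt_nonneg 2)
  have hw0 : 0 < √(√2) := sqrt_pos.2 (sqrt_pos.2 two_pos)
  have hroot : conjRoot 0 = 2 * √(√2) := by
    rw [conjRoot, ← sqrt_sq (by positivity : 0 ≤ 2 * √(√2)), mul_pow, hw]
    norm_num
  rw [dRegular, hroot, two_rpow_neg_seven_fourths, sqrt_rhoN, rhoN_eq]
  field_simp
  linear_combination (2 - 2 * √2) * hw - 2 * sq_sqrt_two

theorem eRegular_zero : eRegular 0 = 2 ^ (-(5 : ℝ) / 2) * rhoN := by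
  have hρ := rhoN_mem_Ioo.1
  have hden : 0 * conjRoot 0 + 1 - rhoN + 0 ^ 2 = 2 * √rhoN := by
    rw [sqrt_rhoN, rhoN_eq]; ring
  simp only [eRegular, hden, two_rpow_neg_five_halves, div_pow, mul_pow, sq_conjRoot,
    sq_sqrt hρ.le]
  field_simp
  linear_combination -4 * rhoN ^ 2 * sq_sqrt_two

theorem exists_eq_rhoN_sub_sq {t : ℝ} (ht : t ∈ Ioo 0 rhoN) :
    ∃ u ∈ Ioo 0 √rhoN, t = rhoN - u ^ 2 := by
  have hpos : 0 ≤ rhoN - t := sub_nonneg.2 ht.2.le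
  refine ⟨√(rhoN - t),
    ⟨sqrt_pos.2 (sub_pos.2 ht.2), sqrt_lt_sqrt hpos (by linarith [ht.1])⟩, ?_⟩
  rw [sq_sqrt hpos]
  ring

theorem one_sub_rhoN_sub_sq_div (u : ℝ) : 1 - (rhoN - u ^ 2) / rhoN = (u / √rhoN) ^ 2 := by
  have := rhoN_mem_Ioo.1
  rw [div_pow, sq_sqrt this.le]
  field_simp
  ring

theorem Dfun_sub_singular {u : ℝ} (hu : 0 < u) :
    Dfun (rhoN - u ^ 2) - 2 ^ (-(7 : ℝ) / 4) * (1 - (rhoN - u ^ 2) / rhoN) ^ (-(1 : ℝ) / 2)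
      = slope dRegular 0 u - 1 / 4 := by
  have := sqrt_pos.2 rhoN_mem_Ioo.1
  have := hu.ne'
  rw [Dfun_rhoN_sub_sq hu, one_sub_rhoN_sub_sq_div, sq_rpow_neg_half (by positivity),
    slope_def_field, dRegular_zero]
  field_simp
  ring

theorem Efun_sub_singular {u : ℝ} (hu : u ∈ Ioo 0 √rhoN) :
    (Efun (rhoN - u ^ 2) - 2 ^ (-(5 : ℝ) / 2) * (1 - (rhoN - u ^ 2) / rhoN)⁻¹)
      * (1 - (rhoN - u ^ 2) / rhoN) ^ ((1 : ℝ) / 2) = slope eRegular 0 u / √rhoN := by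
  have hρ := rhoN_mem_Ioo.1
  have := sqrt_pos.2 hρ
  have := hu.1
  rw [Efun_rhoN_sub_sq hu, one_sub_rhoN_sub_sq_div, sq_rpow_half (by positivity),
    slope_def_field, eRegular_zero, div_pow, sq_sqrt hρ.le]
  field_simp
  ring

theorem singular_expansion_D_and_E :
    (∃ C : ℝ, ∀ t ∈ Set.Ioo (0 : ℝ) rhoN,
      |Dfun t - (2 : ℝ) ^ (-(7 : ℝ) / 4) * (1 - t / rhoN) ^ (-(1 : ℝ) / 2)| ≤ C) ∧
    (∃ C : ℝ, ∀ t ∈ Set.Ioo (0 : ℝ) rhoN,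
      |(Efun t - (2 : ℝ) ^ (-(5 : ℝ) / 2) * (1 - t / rhoN)⁻¹)
        * (1 - t / rhoN) ^ ((1 : ℝ) / 2)| ≤ C) := by
  obtain ⟨CD, hCD⟩ := (contDiff_dRegular.contDiffOn (s := Icc 0 √rhoN)).exists_abs_slope_le
  obtain ⟨CE, hCE⟩ := (contDiffOn_eRegular.mono Icc_subset_Ici_self).exists_abs_slope_le
  have h0 : (0 : ℝ) ∈ Icc 0 √rhoN := left_mem_Icc.2 (sqrt_nonneg _)
  refine ⟨⟨CD + 1 / 4, fun t ht => ?_⟩, ⟨CE / √rhoN, fun t ht => ?_⟩⟩ <;>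
    obtain ⟨u, hu, rfl⟩ := exists_eq_rhoN_sub_sq ht
  · rw [Dfun_sub_singular hu.1]
    calc |slope dRegular 0 u - 1 / 4| ≤ |slope dRegular 0 u| + |1 / 4| := abs_sub _ _
      _ ≤ CD + 1 / 4 := by
        rw [abs_of_pos (by norm_num : (0 : ℝ) < 1 / 4)]
        linarith [hCD 0 h0 u (Ioo_subset_Icc_self hu)]
  · rw [Efun_sub_singular hu, abs_div, abs_of_nonneg (sqrt_nonneg _)]
    exact div_le_div_of_nonneg_right (hCE 0 h0 u (Ioo_subset_Icc_self hu)) (sqrt_nonneg _)
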